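/- arXiv:2204.03412 — 7 statements merged into one kernel-verified Lean document; each statement's English description precedes it below -/
import Mathlib

section
/- Let N = {u_1, …, u_n} be a finite ground set, let g be a non-negative submodular function on N, let ℓ be a non-negative linear function on N, and set f = g + ℓ. Define sets X_0 = ∅, Y_0 = N and, for i = 1, …, n: if f(X_{i−1} ∪ {u_i}) − f(X_{i−1}) ≥ f(Y_{i−1} \ {u_i}) − f(Y_{i−1}), set X_i = X_{i−1} ∪ {u_i} and Y_i = Y_{i−1}; otherwise set X_i = X_{i−1} and Y_i = Y_{i−1} \ {u_i}. Then for every α ∈ [0, 1/3] and every set S ⊆ N, f(X_n) ≥ α·g(S) + (1 − α)·ℓ(S). -/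
/-!
Since `ℓ` is modular, `f = g + ℓ` is submodular. Let `S` be any set and `Oᵢ = (S ∪ Xᵢ) ∩ Yᵢ`,
so that `O₀ = S` and `Oₙ = Xₙ = Yₙ`. By submodularity the two marginals compared at step `i` have
non-negative sum, and the step loses at most their maximum in `f(Oᵢ)`, which is exactly what
`f(Xᵢ) + f(Yᵢ)` gains. Hence `f(Xᵢ) + f(Yᵢ) + f(Oᵢ)` is non-decreasing and
`3 f(Xₙ) ≥ f(∅) + f(N) + f(S) ≥ g(S) + 2 ℓ(S)`; also `f(Yᵢ)` is non-decreasing, so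
`f(Xₙ) ≥ f(N) ≥ ℓ(S)`. The combination with weights `α` and `1 - 3α` gives the bound.
-/

open Finset Function

section DoubleGreedy

variable {α : Type*} [DecidableEq α]

def IsSubmodular (f : Finset α → ℝ) : Prop :=
  ∀ S T : Finset α, f (S ∪ T) + f (S ∩ T) ≤ f S + f T

theorem IsSubmodular.add_sum {g : Finset α → ℝ} (hg : IsSubmodular g) (a : α → ℝ) :
    IsSubmodular fun S ↦ g S + ∑ v ∈ S, a v := by
  intro S T
  linarith [hg S T, sum_union_inter (s₁ := S) (s₂ := T) (f := a)]

theorem IsSubmodular.sub_sdiff_singleton_le {f : Finset α → ℝ} (hf : IsSubmodular f)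
    {X Y : Finset α} {x : α} (hXY : X ⊆ Y) (hxX : x ∉ X) (hxY : x ∈ Y) :
    f Y - f (Y \ {x}) ≤ f (X ∪ {x}) - f X := by
  have h := hf (X ∪ {x}) (Y \ {x})
  rw [show X ∪ {x} ∪ Y \ {x} = Y by grind, show (X ∪ {x}) ∩ (Y \ {x}) = X by grind] at h
  linarith

def DoubleGreedyStep (f : Finset α → ℝ) (x : α) (X Y X' Y' : Finset α) : Prop :=
  (f (X ∪ {x}) - f X ≥ f (Y \ {x}) - f Y → X' = X ∪ {x} ∧ Y' = Y) ∧
    (¬ (f (X ∪ {x}) - f X ≥ f (Y \ {x}) - f Y) → X' = X ∧ Y' = Y \ {x})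

namespace DoubleGreedyStep

variable {f : Finset α → ℝ} {x : α} {X Y X' Y' : Finset α}

theorem sdiff_eq (h : DoubleGreedyStep f x X Y X' Y') : Y' \ X' = (Y \ X) \ {x} := by
  by_cases hc : f (X ∪ {x}) - f X ≥ f (Y \ {x}) - f Y
  · obtain ⟨rfl, rfl⟩ := h.1 hc
    exact (sdiff_sdiff_left ..).symm
  · obtain ⟨rfl, rfl⟩ := h.2 hc
    exact sdiff_right_comm ..

theorem subset (h : DoubleGreedyStep f x X Y X' Y') (hXY : X ⊆ Y) (hx : x ∈ Y \ X) :
    X' ⊆ Y' := by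
  rw [mem_sdiff] at hx
  by_cases hc : f (X ∪ {x}) - f X ≥ f (Y \ {x}) - f Y
  · obtain ⟨rfl, rfl⟩ := h.1 hc
    grind
  · obtain ⟨rfl, rfl⟩ := h.2 hc
    grind

variable (hf : IsSubmodular f) (hXY : X ⊆ Y) (hx : x ∈ Y \ X)
include hf hXY hx

theorem marginals_nonneg : 0 ≤ (f (X ∪ {x}) - f X) + (f (Y \ {x}) - f Y) := by
  rw [mem_sdiff] at hx
  linarith [hf.sub_sdiff_singleton_le hXY hx.2 hx.1]

theorem le_right (h : DoubleGreedyStep f x X Y X' Y') : f Y ≤ f Y' := by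
  have hsum := marginals_nonneg hf hXY hx
  by_cases hc : f (X ∪ {x}) - f X ≥ f (Y \ {x}) - f Y
  · exact (h.1 hc).2 ▸ le_rfl
  · rw [(h.2 hc).2]
    linarith

theorem opt_loss_le (h : DoubleGreedyStep f x X Y X' Y') (S : Finset α) :
    f ((S ∪ X) ∩ Y) - f ((S ∪ X') ∩ Y') ≤ (f X' - f X) + (f Y' - f Y) := by
  have hsum := marginals_nonneg hf hXY hx
  rw [mem_sdiff] at hx
  set O := (S ∪ X) ∩ Y
  by_cases hc : f (X ∪ {x}) - f X ≥ f (Y \ {x}) - f Y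
  · rw [(h.1 hc).1, (h.1 hc).2]
    by_cases hxS : x ∈ S
    · rw [show (S ∪ (X ∪ {x})) ∩ Y = O by grind]
      linarith
    · rw [show (S ∪ (X ∪ {x})) ∩ Y = O ∪ {x} by grind]
      have := hf.sub_sdiff_singleton_le (X := O) inter_subset_right (by grind) hx.1
      linarith
  · rw [(h.2 hc).1, (h.2 hc).2]
    by_cases hxS : x ∈ S
    · rw [show (S ∪ X) ∩ (Y \ {x}) = O \ {x} by grind]
      have := hf.sub_sdiff_singleton_le (Y := O) (by grind) hx.2 (by grind)
      linarith
    · rw [show (S ∪ X) ∩ (Y \ {x}) = O by grind]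
      linarith

end DoubleGreedyStep

section Run

variable [Fintype α] {n : ℕ} {f : Finset α → ℝ} {u : Fin n → α} {X Y : ℕ → Finset α}

theorem doubleGreedy_invariant (hu : Injective u) (hX0 : X 0 = ∅) (hY0 : Y 0 = univ)
    (hstep : ∀ i : Fin n, DoubleGreedyStep f (u i) (X i) (Y i) (X (i + 1)) (Y (i + 1))) :
    ∀ i ≤ n, X i ⊆ Y i ∧ ∀ j : Fin n, u j ∈ Y i \ X i ↔ i ≤ j := by
  intro i hi
  induction i with
  | zero => simp [hX0, hY0]
  | succ i ih =>
    obtain ⟨hXY, hmem⟩ := ih (by omega)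
    have hstep : DoubleGreedyStep f (u ⟨i, hi⟩) (X i) (Y i) (X (i + 1)) (Y (i + 1)) :=
      hstep ⟨i, hi⟩
    refine ⟨hstep.subset hXY ((hmem _).2 le_rfl), fun j ↦ ?_⟩
    rw [hstep.sdiff_eq, mem_sdiff, hmem, mem_singleton, hu.eq_iff, Fin.ext_iff]
    dsimp only
    omega

variable (hu : Injective u) (hX0 : X 0 = ∅) (hY0 : Y 0 = univ)
  (hstep : ∀ i : Fin n, DoubleGreedyStep f (u i) (X i) (Y i) (X (i + 1)) (Y (i + 1)))
include hu hX0 hY0 hstep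

theorem doubleGreedy_subset_mem_sdiff (i : Fin n) : X i ⊆ Y i ∧ u i ∈ Y i \ X i := by
  obtain ⟨hXY, hmem⟩ := doubleGreedy_invariant hu hX0 hY0 hstep i i.is_le'
  exact ⟨hXY, (hmem i).2 le_rfl⟩

theorem doubleGreedy_last_eq (hsurj : Surjective u) : X n = Y n := by
  obtain ⟨hXY, hmem⟩ := doubleGreedy_invariant hu hX0 hY0 hstep n le_rfl
  refine hXY.antisymm fun v hv ↦ by_contra fun hvX ↦ ?_
  obtain ⟨j, rfl⟩ := hsurj v
  exact absurd ((hmem j).1 (mem_sdiff.2 ⟨hv, hvX⟩)) (not_le.2 j.is_lt)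

theorem IsSubmodular.doubleGreedy_univ_le (hf : IsSubmodular f) : f univ ≤ f (Y n) := by
  have hmono : Monotone fun i : Fin (n + 1) ↦ f (Y i) := Fin.monotone_iff_le_succ.2 fun i ↦
    let ⟨hXY, hx⟩ := doubleGreedy_subset_mem_sdiff hu hX0 hY0 hstep i
    (hstep i).le_right hf hXY hx
  simpa [hY0] using hmono (Fin.zero_le (Fin.last n))

theorem IsSubmodular.doubleGreedy_opt_le (hf : IsSubmodular f) (S : Finset α) :
    f ∅ + f univ + f S ≤ f (X n) + f (Y n) + f ((S ∪ X n) ∩ Y n) := by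
  have hmono : Monotone fun i : Fin (n + 1) ↦ f (X i) + f (Y i) + f ((S ∪ X i) ∩ Y i) :=
    Fin.monotone_iff_le_succ.2 fun i ↦ by
      obtain ⟨hXY, hx⟩ := doubleGreedy_subset_mem_sdiff hu hX0 hY0 hstep i
      have := (hstep i).opt_loss_le hf hXY hx S
      simp only [Fin.val_castSucc, Fin.val_succ]
      linarith
  simpa [hX0, hY0] using hmono (Fin.zero_le (Fin.last n))

end Run

end DoubleGreedy

/-- **Deterministic Double Greedy guarantee.**
Let `N = {u 0, …, u (n-1)}` be a finite ground set, `g` a non-negative submodular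
function, `ℓ` a non-negative linear function (with weights `a`), and `f = g + ℓ`.
Run the deterministic Double Greedy algorithm: `X 0 = ∅`, `Y 0 = N`, and at step `i`
either add `u i` to `X` or remove it from `Y` according to the marginal comparison.
Then for every `r ∈ [0, 1/3]` and every `S ⊆ N`,
`f (X n) ≥ r • g S + (1 - r) • ℓ S`. -/
theorem deterministic_double_greedy
    {α : Type*} [Fintype α] [DecidableEq α] {n : ℕ}
    (u : Fin n → α) (hu : Function.Bijective u)
    (g : Finset α → ℝ)
    (hg_sub : ∀ S T : Finset α, g (S ∪ T) + g (S ∩ T) ≤ g S + g T)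
    (hg_nonneg : ∀ S : Finset α, 0 ≤ g S)
    (a : α → ℝ) (ha : ∀ v : α, 0 ≤ a v)
    (ℓ : Finset α → ℝ) (hℓ : ∀ S : Finset α, ℓ S = ∑ v ∈ S, a v)
    (f : Finset α → ℝ) (hf : ∀ S : Finset α, f S = g S + ℓ S)
    (X Y : ℕ → Finset α)
    (hX0 : X 0 = ∅) (hY0 : Y 0 = Finset.univ)
    (hstep : ∀ i : Fin n,
      (f (X i.val ∪ {u i}) - f (X i.val) ≥ f (Y i.val \ {u i}) - f (Y i.val) →
        X (i.val + 1) = X i.val ∪ {u i} ∧ Y (i.val + 1) = Y i.val) ∧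
      (¬ (f (X i.val ∪ {u i}) - f (X i.val) ≥ f (Y i.val \ {u i}) - f (Y i.val)) →
        X (i.val + 1) = X i.val ∧ Y (i.val + 1) = Y i.val \ {u i}))
    (r : ℝ) (hr0 : 0 ≤ r) (hr1 : r ≤ 1 / 3) (S : Finset α) :
    f (X n) ≥ r * g S + (1 - r) * ℓ S := by
  have hsub : IsSubmodular f := by
    rw [show f = fun S ↦ g S + ∑ v ∈ S, a v from funext fun S ↦ by rw [hf, hℓ]]
    exact IsSubmodular.add_sum hg_sub a
  have hlast := doubleGreedy_last_eq hu.1 hX0 hY0 hstep hu.2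
  have hopt := hsub.doubleGreedy_opt_le hu.1 hX0 hY0 hstep S
  have huniv := hsub.doubleGreedy_univ_le hu.1 hX0 hY0 hstep
  rw [← hlast, inter_eq_right.2 subset_union_right] at hopt
  rw [← hlast] at huniv
  have hℓ0 : ℓ ∅ = 0 := by simp [hℓ]
  have hℓS : ℓ S ≤ ℓ univ := by
    simp only [hℓ]
    exact sum_le_sum_of_subset_of_nonneg (subset_univ S) fun v _ _ ↦ ha v
  have hthree : g S + 2 * ℓ S ≤ 3 * f (X n) := by
    linarith [hf ∅, hf univ, hf S, hg_nonneg ∅, hg_nonneg univ]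
  have hlinear : ℓ S ≤ f (X n) := by linarith [hf univ, hg_nonneg univ]
  nlinarith [mul_nonneg hr0 (sub_nonneg.2 hthree),
    mul_nonneg (by linarith : 0 ≤ 1 - 3 * r) (sub_nonneg.2 hlinear)]
end

section
/- Let f be a submodular function on a finite ground set N, let X ⊆ Y ⊆ N, let u ∈ Y \ X, and let S ⊆ N. Define (X', Y') = (X ∪ {u}, Y) if f(X ∪ {u}) − f(X) ≥ f(Y \ {u}) − f(Y), and (X', Y') = (X, Y \ {u}) otherwise. Let O = (S ∪ X) ∩ Y and O' = (S ∪ X') ∩ Y'. Then for every α ∈ [0, 1/3]: α·(f(X') − f(X)) + (1 − 2α)·(f(Y') − f(Y)) ≥ α·(f(O) − f(O')). -/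
/-- **One step of deterministic Double Greedy.**
For a submodular `f`, sets `X ⊆ Y`, an element `u ∈ Y \ X`, and any `S`, letting
`(X', Y')` be the Double Greedy update on `u` and `O = (S ∪ X) ∩ Y`,
`O' = (S ∪ X') ∩ Y'`, for every `r ∈ [0, 1/3]`:
`r·(f X' − f X) + (1 − 2r)·(f Y' − f Y) ≥ r·(f O − f O')`. -/
theorem deterministic_double_greedy_step
    {α : Type*} [DecidableEq α]
    (f : Finset α → ℝ)
    (hf_sub : ∀ S T : Finset α, f (S ∪ T) + f (S ∩ T) ≤ f S + f T)
    (X Y S : Finset α) (hXY : X ⊆ Y) (u : α) (huY : u ∈ Y) (huX : u ∉ X)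
    (X' Y' : Finset α)
    (hstep : (f (X ∪ {u}) - f X ≥ f (Y \ {u}) - f Y → X' = X ∪ {u} ∧ Y' = Y) ∧
             (¬ (f (X ∪ {u}) - f X ≥ f (Y \ {u}) - f Y) → X' = X ∧ Y' = Y \ {u}))
    (O O' : Finset α) (hO : O = (S ∪ X) ∩ Y) (hO' : O' = (S ∪ X') ∩ Y')
    (r : ℝ) (hr0 : 0 ≤ r) (hr1 : r ≤ 1 / 3) :
    r * (f X' - f X) + (1 - 2 * r) * (f Y' - f Y) ≥ r * (f O - f O') := by
  have hXY' : ∀ x, x ∈ X → x ∈ Y := fun x hx => hXY hx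
  -- a + b ≥ 0
  have hab := hf_sub (X ∪ {u}) (Y \ {u})
  have e1 : (X ∪ {u}) ∪ (Y \ {u}) = Y := by
    ext x
    simp only [Finset.mem_union, Finset.mem_sdiff, Finset.mem_singleton]
    constructor
    · rintro ((hx | rfl) | ⟨hx, _⟩) <;> [exact hXY' _ hx; exact huY; exact hx]
    · intro hx
      by_cases hxu : x = u
      · exact Or.inl (Or.inr hxu)
      · exact Or.inr ⟨hx, hxu⟩
  have e2 : (X ∪ {u}) ∩ (Y \ {u}) = X := by
    ext x
    simp only [Finset.mem_inter, Finset.mem_union, Finset.mem_sdiff, Finset.mem_singleton]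
    constructor
    · rintro ⟨(hx | rfl), hy, hne⟩ <;> [exact hx; exact absurd rfl hne]
    · intro hx
      exact ⟨Or.inl hx, hXY' _ hx, fun h => huX (h ▸ hx)⟩
  rw [e1, e2] at hab
  by_cases hcase : f (X ∪ {u}) - f X ≥ f (Y \ {u}) - f Y
  · obtain ⟨hX', hY'⟩ := hstep.1 hcase
    rw [hX', hY'] at hO' ⊢
    subst hO hO'
    have hO'eq : (S ∪ (X ∪ {u})) ∩ Y = ((S ∪ X) ∩ Y) ∪ {u} := by
      ext x
      simp only [Finset.mem_inter, Finset.mem_union, Finset.mem_singleton]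
      constructor
      · rintro ⟨(hx | (hx | rfl)), hy⟩ <;> [exact Or.inl ⟨Or.inl hx, hy⟩;
          exact Or.inl ⟨Or.inr hx, hy⟩; exact Or.inr rfl]
      · rintro (⟨(hx | hx), hy⟩ | rfl) <;>
          [exact ⟨Or.inl hx, hy⟩; exact ⟨Or.inr (Or.inl hx), hy⟩;
           exact ⟨Or.inr (Or.inr rfl), huY⟩]
    rw [hO'eq]
    by_cases hu : u ∈ (S ∪ X) ∩ Y
    · have : ((S ∪ X) ∩ Y) ∪ {u} = (S ∪ X) ∩ Y := by
        ext x
        simp only [Finset.mem_union, Finset.mem_singleton]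
        constructor
        · rintro (hx | rfl) <;> [exact hx; exact hu]
        · exact Or.inl
      rw [this]
      nlinarith [hab, hcase]
    · -- submodularity on (O ∪ {u}) and (Y \ {u})
      set O := (S ∪ X) ∩ Y with hOdef
      have hsub := hf_sub (O ∪ {u}) (Y \ {u})
      have f1 : (O ∪ {u}) ∪ (Y \ {u}) = Y := by
        ext x
        simp only [Finset.mem_union, Finset.mem_sdiff, Finset.mem_singleton, hOdef,
          Finset.mem_inter]
        constructor
        · rintro ((⟨_, hy⟩ | rfl) | ⟨hy, _⟩) <;> [exact hy; exact huY; exact hy]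
        · intro hy
          by_cases hxu : x = u
          · exact Or.inl (Or.inr hxu)
          · exact Or.inr ⟨hy, hxu⟩
      have f2 : (O ∪ {u}) ∩ (Y \ {u}) = O := by
        ext x
        simp only [Finset.mem_inter, Finset.mem_union, Finset.mem_sdiff, Finset.mem_singleton]
        constructor
        · rintro ⟨(hx | rfl), _, hne⟩ <;> [exact hx; exact absurd rfl hne]
        · intro hx
          refine ⟨Or.inl hx, (Finset.mem_inter.mp hx).2, fun h => hu (h ▸ hx)⟩
      rw [f1, f2] at hsub
      nlinarith [hab, hcase, hsub]
  · obtain ⟨hX', hY'⟩ := hstep.2 hcase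
    rw [hX', hY'] at hO' ⊢
    subst hO hO'
    push_neg at hcase
    have hO'eq : (S ∪ X) ∩ (Y \ {u}) = ((S ∪ X) ∩ Y) \ {u} := by
      ext x
      simp only [Finset.mem_inter, Finset.mem_sdiff, Finset.mem_singleton]
      tauto
    rw [hO'eq]
    set O := (S ∪ X) ∩ Y with hOdef
    by_cases hu : u ∈ O
    · have hXO : ∀ x, x ∈ X → x ∈ O := by
        intro x hx
        simp only [hOdef, Finset.mem_inter, Finset.mem_union]
        exact ⟨Or.inr hx, hXY' _ hx⟩
      have hsub := hf_sub (X ∪ {u}) (O \ {u})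
      have g1 : (X ∪ {u}) ∪ (O \ {u}) = O := by
        ext x
        simp only [Finset.mem_union, Finset.mem_sdiff, Finset.mem_singleton]
        constructor
        · rintro ((hx | rfl) | ⟨hx, _⟩) <;> [exact hXO _ hx; exact hu; exact hx]
        · intro hx
          by_cases hxu : x = u
          · exact Or.inl (Or.inr hxu)
          · exact Or.inr ⟨hx, hxu⟩
      have g2 : (X ∪ {u}) ∩ (O \ {u}) = X := by
        ext x
        simp only [Finset.mem_inter, Finset.mem_union, Finset.mem_sdiff, Finset.mem_singleton]
        constructor
        · rintro ⟨(hx | rfl), _, hne⟩ <;> [exact hx; exact absurd rfl hne]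
        · intro hx
          exact ⟨Or.inl hx, hXO _ hx, fun h => huX (h ▸ hx)⟩
      rw [g1, g2] at hsub
      nlinarith [hab, hcase, hsub]
    · have : O \ {u} = O := by
        ext x
        simp only [Finset.mem_sdiff, Finset.mem_singleton]
        exact ⟨fun h => h.1, fun h => ⟨h, fun he => hu (he ▸ h)⟩⟩
      rw [this]
      nlinarith [hab, hcase]
end

section
/- Let g be a non-negative submodular function on a finite ground set N, let β ∈ [0, 1], and let T, S ⊆ N. Then β·E[g(T(β) ∪ (S \ T))] + E[g(T(β) ∩ S)] ≥ β(1−β)·g(S). -/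
/-- `expSample F β T` is the expectation `E[F (T(β))]`, where `T(β)` is a random
subset of `T` containing each element of `T` independently with probability `β`:
`E[F (T(β))] = ∑_{A ⊆ T} β^|A| (1−β)^{|T|−|A|} F A`. -/
noncomputable def expSample {α : Type*} [DecidableEq α]
    (F : Finset α → ℝ) (β : ℝ) (T : Finset α) : ℝ :=
  ∑ A ∈ T.powerset, β ^ A.card * (1 - β) ^ (T.card - A.card) * F A

lemma expSample_empty {α : Type*} [DecidableEq α] (F : Finset α → ℝ) (β : ℝ) :
    expSample F β ∅ = F ∅ := by
  simp [expSample]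

lemma expSample_insert {α : Type*} [DecidableEq α] (F : Finset α → ℝ) (β : ℝ)
    (x : α) (T : Finset α) (hx : x ∉ T) :
    expSample F β (insert x T) =
      (1 - β) * expSample F β T + β * expSample (fun A => F (insert x A)) β T := by
  unfold expSample
  rw [Finset.sum_powerset_insert hx, Finset.mul_sum, Finset.mul_sum]
  congr 1
  · apply Finset.sum_congr rfl
    intro A hA
    have hAT : A ⊆ T := Finset.mem_powerset.mp hA
    have hcard : A.card ≤ T.card := Finset.card_le_card hAT
    rw [Finset.card_insert_of_notMem hx]
    have : T.card + 1 - A.card = (T.card - A.card) + 1 := by omega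
    rw [this, pow_succ]
    ring
  · apply Finset.sum_congr rfl
    intro A hA
    have hAT : A ⊆ T := Finset.mem_powerset.mp hA
    have hxA : x ∉ A := fun h => hx (hAT h)
    rw [Finset.card_insert_of_notMem hx, Finset.card_insert_of_notMem hxA]
    have hcard : A.card ≤ T.card := Finset.card_le_card hAT
    have : T.card + 1 - (A.card + 1) = T.card - A.card := by omega
    rw [this, pow_succ]
    ring

lemma expSample_ge {α : Type*} [DecidableEq α]
    (β : ℝ) (hβ0 : 0 ≤ β) (hβ1 : β ≤ 1) (T : Finset α) :
    ∀ g : Finset α → ℝ,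
      (∀ U V : Finset α, g (U ∪ V) + g (U ∩ V) ≤ g U + g V) →
      (∀ U : Finset α, 0 ≤ g U) →
      (1 - β) * g ∅ + β * g T ≤ expSample g β T := by
  induction T using Finset.induction_on with
  | empty =>
    intro g _ _
    rw [expSample_empty]
    nlinarith
  | @insert x T hx ih =>
    intro g hsub hnn
    rw [expSample_insert g β x T hx]
    have h1 := ih g hsub hnn
    have h2 := ih (fun A => g (insert x A))
      (fun U V => by
        beta_reduce
        rw [Finset.insert_union_distrib, Finset.insert_inter_distrib]
        exact hsub (insert x U) (insert x V))
      (fun U => hnn _)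
    have hsub2 : g (insert x T) + g ∅ ≤ g T + g {x} := by
      have := hsub T {x}
      have hu : T ∪ {x} = insert x T := by
        ext a; simp [or_comm]
      have hi : T ∩ {x} = ∅ := by
        rw [Finset.inter_comm, Finset.singleton_inter_of_notMem hx]
      rwa [hu, hi] at this
    have h2' : (1 - β) * g {x} + β * g (insert x T) ≤
        expSample (fun A => g (insert x A)) β T := by simpa using h2
    nlinarith [hnn (∅ : Finset α), hnn (insert x T), hnn T, hnn ({x} : Finset α),
      mul_nonneg hβ0 (sub_nonneg.mpr hβ1), h2']

/-- For a non-negative submodular `g`, `β ∈ [0, 1]` and sets `T, S`: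
`β·E[g (T(β) ∪ (S \ T))] + E[g (T(β) ∩ S)] ≥ β(1−β)·g S`. -/
theorem sampled_union_inter_bound
    {α : Type*} [Fintype α] [DecidableEq α]
    (g : Finset α → ℝ)
    (hg_sub : ∀ S T : Finset α, g (S ∪ T) + g (S ∩ T) ≤ g S + g T)
    (hg_nonneg : ∀ S : Finset α, 0 ≤ g S)
    (β : ℝ) (hβ0 : 0 ≤ β) (hβ1 : β ≤ 1)
    (T S : Finset α) :
    β * expSample (fun A => g (A ∪ (S \ T))) β T +
      expSample (fun A => g (A ∩ S)) β T ≥ β * (1 - β) * g S := by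
  have h1 := expSample_ge β hβ0 hβ1 T (fun A => g (A ∪ (S \ T)))
    (fun U V => by
      beta_reduce
      have hu : U ∪ V ∪ (S \ T) = (U ∪ (S \ T)) ∪ (V ∪ (S \ T)) := by
        ext a; simp [Finset.mem_union]; tauto
      have hi : U ∩ V ∪ (S \ T) = (U ∪ (S \ T)) ∩ (V ∪ (S \ T)) := by
        ext a; simp [Finset.mem_union, Finset.mem_inter]; tauto
      rw [hu, hi]
      exact hg_sub _ _)
    (fun U => hg_nonneg _)
  have h2 := expSample_ge β hβ0 hβ1 T (fun A => g (A ∩ S))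
    (fun U V => by
      beta_reduce
      rw [Finset.union_inter_distrib_right, Finset.inter_inter_distrib_right]
      exact hg_sub _ _)
    (fun U => hg_nonneg _)
  simp only [Finset.empty_union, Finset.empty_inter] at h1 h2
  have hsubS : g S + g ∅ ≤ g (S \ T) + g (T ∩ S) := by
    have := hg_sub (S \ T) (T ∩ S)
    have hu : S \ T ∪ T ∩ S = S := by
      ext a; simp [Finset.mem_union, Finset.mem_sdiff, Finset.mem_inter]; tauto
    have hi : (S \ T) ∩ (T ∩ S) = ∅ := by
      ext a; simp [Finset.mem_sdiff, Finset.mem_inter]; tauto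
    rwa [hu, hi] at this
  have hβ1' : 0 ≤ 1 - β := sub_nonneg.mpr hβ1
  nlinarith [mul_le_mul_of_nonneg_left h1 hβ0,
    mul_le_mul_of_nonneg_left hsubS (mul_nonneg hβ0 hβ1'),
    mul_nonneg (mul_nonneg hβ0 hβ0) (hg_nonneg (T ∪ S \ T)),
    mul_nonneg (mul_nonneg hβ0 hβ0) (hg_nonneg (T ∩ S)),
    mul_nonneg hβ1' (hg_nonneg (∅ : Finset α)),
    mul_nonneg (mul_nonneg hβ0 hβ1') (hg_nonneg (∅ : Finset α))]
end

section
/- For every real constant c ≥ 1/2, the function x ↦ x^c · ( 4/(5 − x)^2 − 1 ) is non-increasing on the interval [0, 1]. -/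
/-!
Write the function as `x ^ c * g x` with `g x = 4 / (5 - x) ^ 2 - 1`. Its derivative is
`x ^ (c - 1) * (c * g x + x * g' x)`, and since `g ≤ 0` on `[0, 1]` the bracket only decreases as
`c` grows. At `c = 1/2` it equals `(80 - 12 y - y ^ 3) / (2 y ^ 3)` with `y = 5 - x ≥ 4`, which is
negative.
-/

open Set

theorem antitoneOn_rpow_mul_of_hasDerivAt {D : Set ℝ} (hD : Convex ℝ D) (hD₀ : D ⊆ Ici 0)
    {c : ℝ} (hc : 0 ≤ c) {g g' : ℝ → ℝ} (hg : ContinuousOn g D)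
    (hg' : ∀ x ∈ interior D, HasDerivAt g (g' x) x)
    (hsign : ∀ x ∈ interior D, c * g x + x * g' x ≤ 0) :
    AntitoneOn (fun x => x ^ c * g x) D := by
  have hpos : ∀ x ∈ interior D, 0 < x := fun x hx => by
    simpa [interior_Ici] using interior_mono hD₀ hx
  refine antitoneOn_of_hasDerivWithinAt_nonpos (f' := fun x => x ^ (c - 1) * (c * g x + x * g' x))
    hD ?_ (fun x hx => ?_) (fun x hx => ?_)
  · exact ContinuousOn.mul
      (fun x _ => (Real.continuousAt_rpow_const x c (Or.inr hc)).continuousWithinAt) hg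
  · have hx₀ := (hpos x hx).ne'
    refine (((Real.hasDerivAt_rpow_const (Or.inl hx₀)).mul (hg' x hx)).congr_deriv ?_)
      |>.hasDerivWithinAt
    rw [Real.rpow_sub_one hx₀]
    field_simp
  · exact mul_nonpos_of_nonneg_of_nonpos (Real.rpow_nonneg (hpos x hx).le _) (hsign x hx)

theorem four_div_sq_sub_one_nonpos {x : ℝ} (hx : x ≤ 3) : 4 / (5 - x) ^ 2 - 1 ≤ 0 := by
  rw [sub_nonpos, div_le_one (by nlinarith)]
  nlinarith

theorem hasDerivAt_four_div_sq_sub_one {x : ℝ} (hx : x ≠ 5) :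
    HasDerivAt (fun x : ℝ => 4 / (5 - x) ^ 2 - 1) (8 / (5 - x) ^ 3) x := by
  have h5 : 5 - x ≠ 0 := sub_ne_zero.mpr hx.symm
  have hsq : HasDerivAt (fun x : ℝ => (5 - x) ^ 2) (2 * (5 - x) ^ 1 * -1) x :=
    ((hasDerivAt_id' x).const_sub 5).pow 2
  refine (((hasDerivAt_const x (4 : ℝ)).div hsq (pow_ne_zero 2 h5)).sub_const 1).congr_deriv ?_
  field_simp
  ring

theorem mul_four_div_sq_sub_one_add_nonpos {c x : ℝ} (hc : 1 / 2 ≤ c) (hx : x ≤ 1) :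
    c * (4 / (5 - x) ^ 2 - 1) + x * (8 / (5 - x) ^ 3) ≤ 0 := by
  have hy : 4 ≤ 5 - x := by linarith
  have hg := four_div_sq_sub_one_nonpos (x := x) (by linarith)
  have half : (4 / (5 - x) ^ 2 - 1) / 2 + x * (8 / (5 - x) ^ 3)
      = (80 - 12 * (5 - x) - (5 - x) ^ 3) / (2 * (5 - x) ^ 3) := by
    field_simp
    ring
  have half_nonpos : (4 / (5 - x) ^ 2 - 1) / 2 + x * (8 / (5 - x) ^ 3) ≤ 0 := by
    rw [half]
    exact div_nonpos_of_nonpos_of_nonneg (by nlinarith) (by positivity)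
  linarith [mul_nonpos_of_nonneg_of_nonpos (sub_nonneg.mpr hc) hg]

/-- For every real `c ≥ 1/2`, the function `x ↦ x^c · (4/(5 − x)^2 − 1)` is
non-increasing on `[0, 1]` (here `x^c` is the real power function). -/
theorem antitoneOn_rpow_mul
    (c : ℝ) (hc : 1 / 2 ≤ c) :
    AntitoneOn (fun x : ℝ => x ^ c * (4 / (5 - x) ^ 2 - 1)) (Set.Icc 0 1) := by
  refine antitoneOn_rpow_mul_of_hasDerivAt (g' := fun x => 8 / (5 - x) ^ 3) (convex_Icc 0 1)
    (fun x hx => hx.1) (by linarith) ?_ (fun x hx => ?_) (fun x hx => ?_)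
  · exact ContinuousOn.sub
      (continuousOn_const.div (by fun_prop) fun x hx => by nlinarith [hx.2]) continuousOn_const
  all_goals rw [interior_Icc] at hx
  · exact hasDerivAt_four_div_sq_sub_one (by linarith [hx.2])
  · exact mul_four_div_sq_sub_one_add_nonpos hc hx.2.le
end

section
/- For every real β ≥ 0 and every ε > 0, there exists a natural number N such that for all natural numbers n ≥ N and all x ∈ [0, 1]: 1 − (1 − x)^n − n·e^{−β}·x ≤ 1 − (1 + β)·e^{−β} + ε. -/
/-!
With `r = e^{-β}` and `n = m + 1`, the left-hand side is maximised where `(1 - x)^m = r`, i.e. at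
`1 - x = c := e^{-β/m}`. Convexity of `t ↦ t^{m+1}` (its tangent line at `c`) bounds the left-hand
side by its value there, `1 - r (1 + m (1 - c))`, uniformly in `x`. The quadratic bound
`e^{-t} ≤ 1 - t + t²/2` gives `m (1 - c) ≥ β - β²/(2m)`, so the excess over `1 - (1 + β) r` is at
most `β²/(2m)`, which is below `ε` once `m > β²/(2ε)`.
-/

open Real

theorem exp_neg_le_one_sub_add_sq_div_two {t : ℝ} (ht : 0 ≤ t) :
    exp (-t) ≤ 1 - t + t ^ 2 / 2 := by
  rw [exp_neg, inv_le_iff_one_le_mul₀ (exp_pos t)]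
  -- `(1 + t + t²/2) (1 - t + t²/2) = 1 + t⁴/4`
  nlinarith [quadratic_le_exp_of_nonneg ht, sq_nonneg (t - 1), pow_nonneg ht 4]

theorem pow_add_mul_pow_mul_sub_le_pow {c t : ℝ} (hc : 0 < c) (ht : 0 ≤ t) (n : ℕ) :
    c ^ (n + 1) + (n + 1) * c ^ n * (t - c) ≤ t ^ (n + 1) := by
  have hbern := one_add_mul_le_pow (a := t / c - 1) (by linarith [div_nonneg ht hc.le]) (n + 1)
  rw [add_sub_cancel, div_pow, le_div_iff₀ (by positivity)] at hbern
  calc c ^ (n + 1) + (n + 1) * c ^ n * (t - c)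
      = (1 + ((n + 1 : ℕ) : ℝ) * (t / c - 1)) * c ^ (n + 1) := by
        push_cast; field_simp; ring
    _ ≤ t ^ (n + 1) := hbern

theorem one_sub_one_sub_pow_sub_mul_le (β : ℝ) {m : ℕ} (hm : m ≠ 0) {x : ℝ} (hx : x ≤ 1) :
    1 - (1 - x) ^ (m + 1) - (m + 1) * exp (-β) * x ≤
      1 - exp (-β) * (1 + m * (1 - exp (-(β / m)))) := by
  set c := exp (-(β / m))
  have hcm : c ^ m = exp (-β) := by
    rw [← exp_nat_mul]; congr 1; field_simp
  have htangent := pow_add_mul_pow_mul_sub_le_pow (exp_pos (-(β / m))) (sub_nonneg.2 hx) m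
  rw [pow_succ, hcm] at htangent
  linear_combination htangent

theorem sub_mul_one_sub_exp_neg_div_le {β m : ℝ} (hβ : 0 ≤ β) (hm : 0 < m) :
    β - m * (1 - exp (-(β / m))) ≤ β ^ 2 / (2 * m) := by
  have hexp := exp_neg_le_one_sub_add_sq_div_two (div_nonneg hβ hm.le)
  calc β - m * (1 - exp (-(β / m)))
      ≤ β - m * (β / m - (β / m) ^ 2 / 2) := by
        gcongr β - m * ?_
        linarith
    _ = β ^ 2 / (2 * m) := by field_simp; ring

/-- For every real `β ≥ 0` and `ε > 0` there is `N : ℕ` such that for all `n ≥ N`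
and all `x ∈ [0, 1]`:
`1 − (1 − x)^n − n·e^{−β}·x ≤ 1 − (1 + β)·e^{−β} + ε`. -/
theorem monotone_symmetry_gap_bound
    (β : ℝ) (hβ : 0 ≤ β) (ε : ℝ) (hε : 0 < ε) :
    ∃ N : ℕ, ∀ n : ℕ, N ≤ n → ∀ x ∈ Set.Icc (0 : ℝ) 1,
      1 - (1 - x) ^ n - (n : ℝ) * Real.exp (-β) * x ≤
        1 - (1 + β) * Real.exp (-β) + ε := by
  obtain ⟨N, hN⟩ := exists_nat_ge (β ^ 2 / (2 * ε))
  refine ⟨N + 2, fun n hn x hx => ?_⟩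
  obtain ⟨m, rfl⟩ : ∃ m, n = m + 1 := ⟨n - 1, by omega⟩
  have hNm : (N : ℝ) < m := by exact_mod_cast (by omega : N < m)
  have hm : (0 : ℝ) < m := N.cast_nonneg.trans_lt hNm
  have hdeficit : β ^ 2 / (2 * m) ≤ ε := by
    rw [div_le_iff₀ (by positivity)]
    rw [div_le_iff₀ (by positivity)] at hN
    nlinarith
  have hvalue := one_sub_one_sub_pow_sub_mul_le β (m := m) (by omega) hx.2
  have hgap := sub_mul_one_sub_exp_neg_div_le hβ hm
  calc 1 - (1 - x) ^ (m + 1) - ((m + 1 : ℕ) : ℝ) * exp (-β) * x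
      ≤ 1 - exp (-β) * (1 + m * (1 - exp (-(β / m)))) := by push_cast; exact hvalue
    _ = 1 - (1 + β) * exp (-β) + exp (-β) * (β - m * (1 - exp (-(β / m)))) := by ring
    _ ≤ 1 - (1 + β) * exp (-β) + exp (-β) * (β ^ 2 / (2 * m)) := by gcongr
    _ ≤ 1 - (1 + β) * exp (-β) + ε := by
        gcongr
        exact (mul_le_of_le_one_left (by positivity) (exp_le_one_iff.2 (by linarith))).trans hdeficit
end

section
/- For all reals t ≥ 1 and r ∈ (0, 1/2], setting D = √((t + 1)^2 − 8tr) (which is a well-defined real number), one has: (t + 1)(t + 1 + D)/(4t) − r·( 1 − 2·ln((t + 1 − D)/2) ) ≥ t/2. In particular, this expression is non-negative. -/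
/-- Auxiliary: for `0 < x ≤ 1`, `x - 1/x ≤ 2 * log x`. -/
lemma two_log_lower_aux {x : ℝ} (hx0 : 0 < x) (hx1 : x ≤ 1) :
    x - 1/x ≤ 2 * Real.log x := by
  have H : ∀ y : ℝ, 0 < y →
      HasDerivAt (fun z : ℝ => 2 * Real.log z - z + z⁻¹) (2 * y⁻¹ - 1 + -(y^2)⁻¹) y := by
    intro y hy
    have h1 : HasDerivAt Real.log y⁻¹ y := Real.hasDerivAt_log hy.ne'
    have h2 : HasDerivAt (fun z : ℝ => z⁻¹) (-(y^2)⁻¹) y := hasDerivAt_inv hy.ne'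
    exact ((h1.const_mul 2).sub (hasDerivAt_id y)).add h2
  have hanti : AntitoneOn (fun z : ℝ => 2 * Real.log z - z + z⁻¹) (Set.Icc x 1) := by
    apply antitoneOn_of_deriv_nonpos (convex_Icc x 1)
    · intro y hy
      have hy0 : 0 < y := lt_of_lt_of_le hx0 hy.1
      exact (H y hy0).continuousAt.continuousWithinAt
    · intro y hy
      rw [interior_Icc] at hy
      have hy0 : 0 < y := lt_trans hx0 hy.1
      exact (H y hy0).differentiableAt.differentiableWithinAt
    · intro y hy
      rw [interior_Icc] at hy
      have hy0 : 0 < y := lt_trans hx0 hy.1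
      rw [(H y hy0).deriv]
      have heq : 2 * y⁻¹ - 1 + -(y^2)⁻¹ = -((y-1)^2 / y^2) := by
        field_simp
        ring
      rw [heq]
      have : (0:ℝ) ≤ (y-1)^2 / y^2 := by positivity
      linarith
  have hmem1 : (1:ℝ) ∈ Set.Icc x 1 := ⟨hx1, le_refl 1⟩
  have hmemx : x ∈ Set.Icc x 1 := ⟨le_refl x, hx1⟩
  have := hanti hmemx hmem1 hx1
  simp only [Real.log_one] at this
  have hinv : (1:ℝ)/x = x⁻¹ := one_div x
  linarith

/-- For reals `t ≥ 1` and `r ∈ (0, 1/2]`, with `D = √((t+1)^2 − 8tr)`: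
`(t+1)(t+1+D)/(4t) − r·(1 − 2·ln((t+1−D)/2)) ≥ t/2`, and in particular this
expression is non-negative. -/
theorem hard_instance_value_positive
    (t r : ℝ) (ht : 1 ≤ t) (hr0 : 0 < r) (hr1 : r ≤ 1 / 2) :
    (t + 1) * (t + 1 + Real.sqrt ((t + 1) ^ 2 - 8 * t * r)) / (4 * t) -
        r * (1 - 2 * Real.log ((t + 1 - Real.sqrt ((t + 1) ^ 2 - 8 * t * r)) / 2)) ≥
      t / 2 ∧
    0 ≤ (t + 1) * (t + 1 + Real.sqrt ((t + 1) ^ 2 - 8 * t * r)) / (4 * t) -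
        r * (1 - 2 * Real.log ((t + 1 - Real.sqrt ((t + 1) ^ 2 - 8 * t * r)) / 2)) := by
  have ht0 : (0:ℝ) < t := lt_of_lt_of_le one_pos ht
  set A : ℝ := (t + 1) ^ 2 - 8 * t * r with hA_def
  set D : ℝ := Real.sqrt A with hD_def
  have hAlb : (t - 1)^2 ≤ A := by
    have : 8 * t * r ≤ 4 * t := by nlinarith
    nlinarith
  have hA0 : 0 ≤ A := le_trans (sq_nonneg _) hAlb
  have hD2 : D^2 = A := Real.sq_sqrt hA0
  have hDlb : t - 1 ≤ D := by
    have h1 : Real.sqrt ((t-1)^2) ≤ Real.sqrt A := Real.sqrt_le_sqrt hAlb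
    rwa [Real.sqrt_sq (by linarith : (0:ℝ) ≤ t - 1)] at h1
  have hDub : D < t + 1 := by
    have hA_lt : A < (t+1)^2 := by nlinarith
    have h1 : Real.sqrt A < Real.sqrt ((t+1)^2) := Real.sqrt_lt_sqrt hA0 hA_lt
    rwa [Real.sqrt_sq (by linarith : (0:ℝ) ≤ t + 1)] at h1
  set x : ℝ := (t + 1 - D) / 2 with hx_def
  have hx0 : 0 < x := by
    rw [hx_def]; linarith
  have hx1 : x ≤ 1 := by
    rw [hx_def]; linarith
  have hkey : x * (t + 1 - x) = 2 * t * r := by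
    have : D^2 = (t+1)^2 - 8*t*r := hD2
    rw [hx_def]; nlinarith
  have hconstraint : x * (t + 1 - x) ≤ t := by
    rw [hkey]; nlinarith
  set L : ℝ := Real.log x with hL_def
  have hlog : x - 1/x ≤ 2 * L := two_log_lower_aux hx0 hx1
  -- key polynomial inequality
  have h1 : (x^2 - 1) * (t + 1 - x) ≤ 2 * x * (t + 1 - x) * L := by
    have hxL : x^2 - 1 ≤ 2 * x * L := by
      have := mul_le_mul_of_nonneg_left hlog hx0.le
      have hxne : x ≠ 0 := hx0.ne'
      field_simp at this
      nlinarith [this]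
    have hsx : 0 ≤ t + 1 - x := by linarith
    calc (x^2 - 1) * (t + 1 - x) ≤ (2 * x * L) * (t + 1 - x) :=
          mul_le_mul_of_nonneg_right hxL hsx
      _ = 2 * x * (t + 1 - x) * L := by ring
  have h2 : t^2 ≤ (t + 1 - x)^2 + (x^2 - 1) * (t + 1 - x) := by
    nlinarith [mul_nonneg (by linarith : (0:ℝ) ≤ 1 - x) (by linarith [hconstraint] : (0:ℝ) ≤ t - x * (t + 1 - x))]
  have h3 : t^2 ≤ (t + 1 - x)^2 + 2 * x * (t + 1 - x) * L := le_trans h2 (by linarith)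
  have hDx : D = t + 1 - 2 * x := by rw [hx_def]; ring
  have hr : r = x * (t + 1 - x) / (2 * t) := by
    field_simp
    linarith [hkey]
  have harg : (t + 1 - D) / 2 = x := rfl
  have main : (t + 1) * (t + 1 + D) / (4 * t) - r * (1 - 2 * L) ≥ t / 2 := by
    rw [hDx, hr, ge_iff_le, ← sub_nonneg]
    have hexpr : (t + 1) * (t + 1 + (t + 1 - 2 * x)) / (4 * t) -
        x * (t + 1 - x) / (2 * t) * (1 - 2 * L) - t / 2 =
        ((t + 1 - x) ^ 2 + 2 * x * (t + 1 - x) * L - t ^ 2) / (2 * t) := by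
      field_simp
      ring
    rw [hexpr]
    apply div_nonneg _ (by positivity)
    linarith [h3]
  rw [harg] at *
  constructor
  · exact main
  · have : (0:ℝ) < t / 2 := by linarith
    linarith [main]
end

section
/- Let f be a submodular function on a finite ground set N, let X ⊆ Y ⊆ N, let u ∈ Y \ X, and let S ⊆ N. Define (X', Y') = (X ∪ {u}, Y) if f(X ∪ {u}) − f(X) ≥ f(Y \ {u}) − f(Y), and (X', Y') = (X, Y \ {u}) otherwise. Let O = (S ∪ X) ∩ Y and O' = (S ∪ X') ∩ Y'. Then (f(X') − f(X)) + (f(Y') − f(Y)) ≥ f(O) − f(O'). -/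
lemma ddg_union_sdiff {α : Type*} [DecidableEq α] {A Y : Finset α} {u : α}
    (hAY : A ⊆ Y) (huY : u ∈ Y) :
    (A ∪ {u}) ∪ (Y \ {u}) = Y := by
  ext x
  have := @hAY x
  simp only [Finset.mem_union, Finset.mem_sdiff, Finset.mem_singleton]
  by_cases hxu : x = u
  · subst hxu; tauto
  · tauto

lemma ddg_inter_sdiff {α : Type*} [DecidableEq α] {A Y : Finset α} {u : α}
    (hAY : A ⊆ Y) (huA : u ∉ A) :
    (A ∪ {u}) ∩ (Y \ {u}) = A := by
  ext x
  have := @hAY x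
  simp only [Finset.mem_union, Finset.mem_inter, Finset.mem_sdiff, Finset.mem_singleton]
  by_cases hxu : x = u
  · subst hxu; tauto
  · tauto

lemma ddg_h1 {α : Type*} [DecidableEq α] (S X Y : Finset α) {u : α} (huY : u ∈ Y) :
    (S ∪ (X ∪ {u})) ∩ Y = ((S ∪ X) ∩ Y) ∪ {u} := by
  ext x
  simp only [Finset.mem_union, Finset.mem_inter, Finset.mem_singleton]
  by_cases hxu : x = u
  · subst hxu; tauto
  · tauto

lemma ddg_h2 {α : Type*} [DecidableEq α] (S X Y : Finset α) (u : α) :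
    (S ∪ X) ∩ (Y \ {u}) = ((S ∪ X) ∩ Y) \ {u} := by
  ext x
  simp only [Finset.mem_union, Finset.mem_inter, Finset.mem_sdiff, Finset.mem_singleton]
  tauto

lemma ddg_e1 {α : Type*} [DecidableEq α] {X O : Finset α} {u : α}
    (hXO : X ⊆ O) (huO : u ∈ O) :
    (X ∪ {u}) ∪ (O \ {u}) = O := ddg_union_sdiff hXO huO

lemma ddg_e2 {α : Type*} [DecidableEq α] {X O : Finset α} {u : α}
    (hXO : X ⊆ O) (huX : u ∉ X) :
    (X ∪ {u}) ∩ (O \ {u}) = X := ddg_inter_sdiff hXO huX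

/-- **One step of deterministic Double Greedy (unweighted inequality).**
For a submodular `f`, sets `X ⊆ Y`, an element `u ∈ Y \ X`, and any `S`, letting
`(X', Y')` be the Double Greedy update on `u` and `O = (S ∪ X) ∩ Y`,
`O' = (S ∪ X') ∩ Y'`:
`(f X' − f X) + (f Y' − f Y) ≥ f O − f O'`. -/
theorem deterministic_double_greedy_step_basic
    {α : Type*} [DecidableEq α]
    (f : Finset α → ℝ)
    (hf_sub : ∀ S T : Finset α, f (S ∪ T) + f (S ∩ T) ≤ f S + f T)
    (X Y S : Finset α) (hXY : X ⊆ Y) (u : α) (huY : u ∈ Y) (huX : u ∉ X)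
    (X' Y' : Finset α)
    (hstep : (f (X ∪ {u}) - f X ≥ f (Y \ {u}) - f Y → X' = X ∪ {u} ∧ Y' = Y) ∧
             (¬ (f (X ∪ {u}) - f X ≥ f (Y \ {u}) - f Y) → X' = X ∧ Y' = Y \ {u}))
    (O O' : Finset α) (hO : O = (S ∪ X) ∩ Y) (hO' : O' = (S ∪ X') ∩ Y') :
    (f X' - f X) + (f Y' - f Y) ≥ f O - f O' := by
  subst hO hO'
  have hsum : f X + f Y ≤ f (X ∪ {u}) + f (Y \ {u}) := by
    have h := hf_sub (X ∪ {u}) (Y \ {u})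
    rw [ddg_union_sdiff hXY huY, ddg_inter_sdiff hXY huX] at h
    linarith
  have hOY : (S ∪ X) ∩ Y ⊆ Y := Finset.inter_subset_right
  have hXO : X ⊆ (S ∪ X) ∩ Y := Finset.subset_inter Finset.subset_union_right hXY
  by_cases hcond : f (X ∪ {u}) - f X ≥ f (Y \ {u}) - f Y
  · obtain ⟨hX', hY'⟩ := hstep.1 hcond
    rw [hX', hY', ddg_h1 S X Y huY]
    by_cases hu : u ∈ (S ∪ X) ∩ Y
    · rw [Finset.union_eq_left.mpr (Finset.singleton_subset_iff.mpr hu)]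
      linarith
    · have h := hf_sub (((S ∪ X) ∩ Y) ∪ {u}) (Y \ {u})
      rw [ddg_union_sdiff hOY huY, ddg_inter_sdiff hOY hu] at h
      linarith
  · obtain ⟨hX', hY'⟩ := hstep.2 hcond
    rw [hX', hY', ddg_h2 S X Y u]
    push_neg at hcond
    by_cases hu : u ∈ (S ∪ X) ∩ Y
    · have h := hf_sub (X ∪ {u}) (((S ∪ X) ∩ Y) \ {u})
      rw [ddg_e1 hXO hu, ddg_e2 hXO huX] at h
      linarith
    · rw [show ((S ∪ X) ∩ Y) \ {u} = (S ∪ X) ∩ Y from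
        Finset.sdiff_eq_self_iff_disjoint.mpr (by simp [hu])]
      linarith
end
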